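/- Let A = (a,b;c,d) ∈ SL₂(ℤ) with tr(A) > 2 (so b ≠ 0, c ≠ 0), let s > 0 satisfy e^{s} + e^{−s} = tr(A), and let Γ(A) = {( p − ((e^{s}−a)/b)·q , q − ((e^{−s}−d)/c)·p , s·r ) : p,q,r ∈ ℤ} be the corresponding subgroup of Sol. Let g₁, g₂ ∈ Sol be such that g₁⁻¹g₂ = (0, y, z) with y ≠ 0, or g₁⁻¹g₂ = (x, 0, z) with x ≠ 0. Then the pair of points m₁ = g₁Γ(A), m₂ = g₂Γ(A) in Sol/Γ(A) is not blockable. -/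

import Mathlib

noncomputable section

/-- The group `Sol`: underlying set `ℝ³` with multiplication
`(x₁,y₁,z₁)·(x₂,y₂,z₂) = (x₁ + e^{z₁}x₂, y₁ + e^{−z₁}y₂, z₁ + z₂)`. -/
def Sol : Type := ℝ × ℝ × ℝ

namespace Sol

instance : TopologicalSpace Sol := inferInstanceAs (TopologicalSpace (ℝ × ℝ × ℝ))

/-- Build an element of `Sol` from coordinates. -/
def mk (x y z : ℝ) : Sol := ((x, y, z) : ℝ × ℝ × ℝ)

/-- First coordinate. -/
def X (g : Sol) : ℝ := (show ℝ × ℝ × ℝ from g).1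
/-- Second coordinate. -/
def Y (g : Sol) : ℝ := (show ℝ × ℝ × ℝ from g).2.1
/-- Third coordinate. -/
def Z (g : Sol) : ℝ := (show ℝ × ℝ × ℝ from g).2.2

theorem ext {a b : Sol} (h1 : X a = X b) (h2 : Y a = Y b) (h3 : Z a = Z b) : a = b :=
  show (show ℝ × ℝ × ℝ from a) = (show ℝ × ℝ × ℝ from b) from
    Prod.ext h1 (Prod.ext h2 h3)

instance : One Sol := ⟨mk 0 0 0⟩
instance : Mul Sol :=
  ⟨fun a b => mk (X a + Real.exp (Z a) * X b) (Y a + Real.exp (-Z a) * Y b) (Z a + Z b)⟩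
instance : Inv Sol :=
  ⟨fun a => mk (-(Real.exp (-Z a) * X a)) (-(Real.exp (Z a) * Y a)) (-Z a)⟩

@[simp] theorem X_mk (x y z : ℝ) : X (mk x y z) = x := rfl
@[simp] theorem Y_mk (x y z : ℝ) : Y (mk x y z) = y := rfl
@[simp] theorem Z_mk (x y z : ℝ) : Z (mk x y z) = z := rfl

@[simp] theorem X_one : X (1 : Sol) = 0 := rfl
@[simp] theorem Y_one : Y (1 : Sol) = 0 := rfl
@[simp] theorem Z_one : Z (1 : Sol) = 0 := rfl

@[simp] theorem X_mul (a b : Sol) : X (a * b) = X a + Real.exp (Z a) * X b := rfl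
@[simp] theorem Y_mul (a b : Sol) : Y (a * b) = Y a + Real.exp (-Z a) * Y b := rfl
@[simp] theorem Z_mul (a b : Sol) : Z (a * b) = Z a + Z b := rfl

@[simp] theorem X_inv (a : Sol) : X a⁻¹ = -(Real.exp (-Z a) * X a) := rfl
@[simp] theorem Y_inv (a : Sol) : Y a⁻¹ = -(Real.exp (Z a) * Y a) := rfl
@[simp] theorem Z_inv (a : Sol) : Z a⁻¹ = -Z a := rfl

instance : Group Sol :=
  Group.ofLeftAxioms
    (fun a b c => ext
      (by simp [Real.exp_add]; ring)
      (by simp [Real.exp_add, neg_add]; ring)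
      (by simp; ring))
    (fun a => ext (by simp) (by simp) (by simp))
    (fun a => ext (by simp) (by simp) (by simp))

/-- A (continuous) one-parameter subgroup of `Sol`: a continuous group homomorphism
from `(ℝ,+)` to `Sol`. -/
def IsOneParam (σ : ℝ → Sol) : Prop :=
  Continuous σ ∧ ∀ s t : ℝ, σ (s + t) = σ s * σ t

/-- A pair of points `m₁ m₂` of the homogeneous space `Sol ⧸ Γ` is blockable if some finite
set `B` avoiding `m₁, m₂` meets every connecting curve `t ↦ σ(t)•m₁`, `t ∈ [0,1]`, where
`σ` is a one-parameter subgroup with `σ(1)•m₁ = m₂`. -/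
def Blockable (Γ : Subgroup Sol) (m₁ m₂ : Sol ⧸ Γ) : Prop :=
  ∃ B : Finset (Sol ⧸ Γ), m₁ ∉ B ∧ m₂ ∉ B ∧
    ∀ σ : ℝ → Sol, IsOneParam σ → σ 1 • m₁ = m₂ →
      ∃ t ∈ Set.Icc (0 : ℝ) 1, σ t • m₁ ∈ B

end Sol

/-- The subset `Γ(A) = {(p − ((e^s−a)/b)q, q − ((e^{−s}−d)/c)p, s·r) : p,q,r ∈ ℤ}` of `Sol`. -/
def latticeSet (a b c d s : ℝ) : Set Sol :=
  {g : Sol | ∃ p q r : ℤ,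
    g = Sol.mk ((p : ℝ) - (Real.exp s - a) / b * (q : ℝ))
      ((q : ℝ) - (Real.exp (-s) - d) / c * (p : ℝ)) (s * (r : ℤ))}

/-!
Since `(0, 0, s r) ∈ Γ(A)` for all `r ∈ ℤ`, every point `(0, y, z + s r)` yields a connecting
curve from `m₁` to `m₂`: the one-parameter subgroup of the plane `x = 0` through it, conjugated
by `g₁`. A finite blocking set would be met by infinitely many of these curves in one common
point `g Γ(A)`. As `e^s` is a root of `X² - tr(A) X + 1` with `tr(A) > 2`, it is irrational, hence
so is `(e^s - a) / b`, and then the `x`-coordinate of a lattice point determines its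
`y`-coordinate. So the hitting points all have the same `y`-coordinate, while their heights lie
in a coset of `sℤ`. On the curve through `(0, y, ζ)` the `y`-coordinate at height `u` is
`y (1 - e^{-u}) / (1 - e^{-ζ})`, which forces these heights to be pairwise distinct and bounded:
a contradiction. The case `y = 0` is symmetric, with curves in the plane `y = 0` and
`(e^{-s} - d) / c` irrational.
-/

open Real Set Function

namespace Sol

@[fun_prop] theorem continuous_X : Continuous X := continuous_fst
@[fun_prop] theorem continuous_Y : Continuous Y := continuous_fst.comp continuous_snd
@[fun_prop] theorem continuous_Z : Continuous Z := continuous_snd.comp continuous_snd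

@[fun_prop] theorem continuous_mk {α : Type*} [TopologicalSpace α] {f g h : α → ℝ}
    (hf : Continuous f) (hg : Continuous g) (hh : Continuous h) :
    Continuous fun a => mk (f a) (g a) (h a) :=
  hf.prodMk (hg.prodMk hh)

instance : IsTopologicalGroup Sol where
  continuous_mul := by
    change Continuous fun p : Sol × Sol =>
      mk (X p.1 + exp (Z p.1) * X p.2) (Y p.1 + exp (-Z p.1) * Y p.2) (Z p.1 + Z p.2)
    fun_prop
  continuous_inv := by
    change Continuous fun a : Sol => mk (-(exp (-Z a) * X a)) (-(exp (Z a) * Y a)) (-Z a)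
    fun_prop

theorem IsOneParam.map_zero {σ : ℝ → Sol} (hσ : IsOneParam σ) : σ 0 = 1 :=
  mul_eq_left.mp <| by rw [← hσ.2 0 0, add_zero]

theorem IsOneParam.conj {σ : ℝ → Sol} (hσ : IsOneParam σ) (g : Sol) :
    IsOneParam fun t => g * σ t * g⁻¹ :=
  ⟨by have := hσ.1; fun_prop, fun a b => by simp only [hσ.2 a b]; group⟩

def curveY (y ξ t : ℝ) : Sol := mk 0 (y * ((1 - exp (-(ξ * t))) / (1 - exp (-ξ)))) (ξ * t)

-- Running downwards in height, so that both families lead to the same one-variable problem.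
def curveX (x ξ t : ℝ) : Sol := mk (x * ((1 - exp (-(ξ * t))) / (1 - exp (-ξ)))) 0 (-(ξ * t))

theorem isOneParam_curveY (y ξ : ℝ) : IsOneParam (curveY y ξ) := by
  refine ⟨by unfold curveY; fun_prop, fun a b => ext ?_ ?_ ?_⟩ <;>
    simp only [curveY, X_mk, Y_mk, Z_mk, X_mul, Y_mul, Z_mul, mul_add, neg_add, exp_add] <;> ring

theorem isOneParam_curveX (x ξ : ℝ) : IsOneParam (curveX x ξ) := by
  refine ⟨by unfold curveX; fun_prop, fun a b => ext ?_ ?_ ?_⟩ <;>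
    simp only [curveX, X_mk, Y_mk, Z_mk, X_mul, Y_mul, Z_mul, mul_add, neg_add, neg_neg,
      exp_add] <;> ring

theorem curveY_one (y : ℝ) {ξ : ℝ} (hξ : ξ ≠ 0) : curveY y ξ 1 = mk 0 y ξ := by
  have : 1 - exp (-ξ) ≠ 0 := by rwa [sub_ne_zero, ne_comm, Ne, exp_eq_one_iff, neg_eq_zero]
  simp [curveY, this]

theorem curveX_one (x : ℝ) {ξ : ℝ} (hξ : ξ ≠ 0) : curveX x ξ 1 = mk x 0 (-ξ) := by
  have : 1 - exp (-ξ) ≠ 0 := by rwa [sub_ne_zero, ne_comm, Ne, exp_eq_one_iff, neg_eq_zero]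
  simp [curveX, this]

theorem Blockable.exists_infinite_hits {Γ : Subgroup Sol} {g₁ g₂ : Sol}
    (hB : Blockable Γ (QuotientGroup.mk g₁) (QuotientGroup.mk g₂))
    {τ : ℕ → ℝ → Sol} (hτ : ∀ n, IsOneParam (τ n))
    (hτ₁ : ∀ n, (QuotientGroup.mk (g₁ * τ n 1) : Sol ⧸ Γ) = QuotientGroup.mk g₂) :
    ∃ v : Sol, ∃ t : ℕ → ℝ, {n | t n ∈ Ioo 0 1 ∧ v⁻¹ * τ n (t n) ∈ Γ}.Infinite := by
  obtain ⟨B, hg₁B, hg₂B, hB⟩ := hB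
  have hσ : ∀ n t, (g₁ * τ n t * g₁⁻¹) • (QuotientGroup.mk g₁ : Sol ⧸ Γ) =
      QuotientGroup.mk (g₁ * τ n t) := by
    intro n t
    rw [MulAction.Quotient.smul_mk, smul_eq_mul, inv_mul_cancel_right]
  choose t ht htB using fun n => hB _ ((hτ n).conj g₁) ((hσ n 1).trans (hτ₁ n))
  obtain ⟨⟨b, hb⟩, hfib⟩ := Finite.exists_infinite_fiber fun n => (⟨_, htB n⟩ : B)
  obtain ⟨w, rfl⟩ := QuotientGroup.mk_surjective b
  refine ⟨g₁⁻¹ * w, t, (Set.infinite_coe_iff.mp hfib).mono fun n hn => ?_⟩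
  have hw : (QuotientGroup.mk (g₁ * τ n (t n)) : Sol ⧸ Γ) = QuotientGroup.mk w := by
    rw [← hσ]
    exact congrArg Subtype.val hn
  refine ⟨⟨(ht n).1.lt_of_ne ?_, (ht n).2.lt_of_ne ?_⟩, ?_⟩
  · rintro h0
    rw [← h0, (hτ n).map_zero, mul_one] at hw
    exact hg₁B (hw ▸ hb)
  · rintro h1
    rw [h1, hτ₁] at hw
    exact hg₂B (hw ▸ hb)
  · simpa [mul_assoc] using QuotientGroup.eq.mp hw.symm

end Sol

theorem finite_setOf_add_mul_intCast_mem_Ioo {s : ℝ} (hs : 0 < s) (θ a b : ℝ) :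
    {k : ℤ | θ + s * k ∈ Ioo a b}.Finite := by
  refine (tendsto_cofinite_cocompact_iff.mp Int.tendsto_coe_cofinite _
    (isCompact_Icc (a := (a - θ) / s) (b := (b - θ) / s))).subset fun k ⟨ha, hb⟩ => ⟨?_, ?_⟩
  · rw [div_le_iff₀ hs]
    linarith
  · rw [le_div_iff₀ hs]
    linarith

theorem finite_of_ratio_one_sub_exp_neg_eq {s θ : ℝ} (hs : 0 < s) {ξ u : ℕ → ℝ}
    (hξ : Injective ξ) {S : Set ℕ} (hu : ∀ n ∈ S, 0 < u n ∧ u n < ξ n)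
    (hdisc : ∀ n ∈ S, ∃ k : ℤ, u n = θ + s * k)
    (hconst : ∀ n ∈ S, ∀ m ∈ S,
      (1 - exp (-u n)) / (1 - exp (-ξ n)) = (1 - exp (-u m)) / (1 - exp (-ξ m))) :
    S.Finite := by
  rcases S.eq_empty_or_nonempty with rfl | ⟨n₀, hn₀⟩
  · exact finite_empty
  set f : ℝ → ℝ := fun a => 1 - exp (-a)
  have hf : StrictMono f := fun a b hab => by
    simpa [f] using exp_lt_exp.2 (neg_lt_neg hab)
  have hf0 : f 0 = 0 := by simp [f]
  have hf1 : ∀ a, f a < 1 := fun a => by simpa [f] using exp_pos (-a)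
  have hfξ : ∀ n ∈ S, 0 < f (ξ n) := fun n hn => hf0 ▸ hf ((hu n hn).1.trans (hu n hn).2)
  set K := f (u n₀) / f (ξ n₀)
  have hK : ∀ n ∈ S, f (u n) = K * f (ξ n) := fun n hn => by
    rw [← div_eq_iff (hfξ n hn).ne']
    exact hconst n hn n₀ hn₀
  have hK0 : 0 < K := div_pos (hf0 ▸ hf (hu n₀ hn₀).1) (hfξ n₀ hn₀)
  have hK1 : K < 1 := (div_lt_one (hfξ n₀ hn₀)).2 (hf (hu n₀ hn₀).2)
  have hbound : ∀ n ∈ S, u n < -log (1 - K) := fun n hn => by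
    have : f (u n) < K := by
      rw [hK n hn]
      exact mul_lt_of_lt_one_right hK0 (hf1 _)
    rw [lt_neg, log_lt_iff_lt_exp (by linarith)]
    simp only [f] at this
    linarith
  have hinj : InjOn u S := fun n hn m hm h => hξ <| hf.injective <|
    mul_left_cancel₀ hK0.ne' <| by rw [← hK n hn, ← hK m hm, h]
  refine Finite.of_finite_image
    (((finite_setOf_add_mul_intCast_mem_Ioo hs θ 0 (-log (1 - K))).image
      fun k : ℤ => θ + s * k).subset ?_) hinj
  rintro _ ⟨n, hn, rfl⟩
  obtain ⟨k, hk⟩ := hdisc n hn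
  exact ⟨k, show θ + s * k ∈ Ioo 0 _ from hk ▸ ⟨(hu n hn).1, hbound n hn⟩, hk.symm⟩

theorem exists_injective_pos_seq_add_mul_intCast {s : ℝ} (hs : 0 < s) (z : ℝ) :
    ∃ ξ : ℕ → ℝ, Injective ξ ∧ ∀ n, 0 < ξ n ∧ ∃ r : ℤ, ξ n = z + s * r := by
  obtain ⟨N, hN⟩ := exists_nat_gt (-z / s)
  rw [div_lt_iff₀ hs] at hN
  refine ⟨fun n => z + s * (N + n), fun m n h => by simpa [hs.ne'] using h,
    fun n => ⟨by nlinarith [(n.cast_nonneg : (0 : ℝ) ≤ n)], N + n, by push_cast; rfl⟩⟩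

namespace Sol

variable {Γ : Subgroup Sol}

theorem Y_eq_of_X_eq_of_inv_mul_mem (hΓ : ∀ γ ∈ Γ, ∀ γ' ∈ Γ, X γ = X γ' → Y γ = Y γ')
    {v h h' : Sol} (hh : v⁻¹ * h ∈ Γ) (hh' : v⁻¹ * h' ∈ Γ) (hX : X h = X h') : Y h = Y h' := by
  simpa using hΓ _ hh _ hh' (by simp [hX])

theorem X_eq_of_Y_eq_of_inv_mul_mem (hΓ : ∀ γ ∈ Γ, ∀ γ' ∈ Γ, Y γ = Y γ' → X γ = X γ')
    {v h h' : Sol} (hh : v⁻¹ * h ∈ Γ) (hh' : v⁻¹ * h' ∈ Γ) (hY : Y h = Y h') : X h = X h' := by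
  simpa using hΓ _ hh _ hh' (by simp [hY])

theorem not_blockable_of_inv_mul_eq_mk_zero_fst {s : ℝ} (hs : 0 < s)
    (hΓs : ∀ r : ℤ, mk 0 0 (s * r) ∈ Γ) (hΓZ : ∀ γ ∈ Γ, ∃ k : ℤ, Z γ = s * k)
    (hΓXY : ∀ γ ∈ Γ, ∀ γ' ∈ Γ, X γ = X γ' → Y γ = Y γ')
    {g₁ g₂ : Sol} {y z : ℝ} (hy : y ≠ 0) (h : g₁⁻¹ * g₂ = mk 0 y z) :
    ¬ Blockable Γ (QuotientGroup.mk g₁) (QuotientGroup.mk g₂) := by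
  intro hB
  obtain ⟨ξ, hξinj, hξ⟩ := exists_injective_pos_seq_add_mul_intCast hs z
  obtain ⟨v, t, hS⟩ := hB.exists_infinite_hits (fun n => isOneParam_curveY y (ξ n)) fun n => by
    obtain ⟨r, hr⟩ := (hξ n).2
    rw [curveY_one _ (hξ n).1.ne', ← QuotientGroup.mk_mul_of_mem g₂ (hΓs r),
      ← mul_inv_cancel_left g₁ g₂, h, mul_assoc]
    congr 2
    exact ext (by simp) (by simp) (by simp [hr])
  refine hS (finite_of_ratio_one_sub_exp_neg_eq hs hξinj (u := fun n => ξ n * t n) (θ := Z v)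
    (fun n hn => ⟨mul_pos (hξ n).1 hn.1.1, mul_lt_of_lt_one_right (hξ n).1 hn.1.2⟩)
    (fun n hn => ?_) (fun n hn m hm => ?_))
  · obtain ⟨k, hk⟩ := hΓZ _ hn.2
    exact ⟨k, by simp [curveY] at hk; linarith⟩
  · have := Y_eq_of_X_eq_of_inv_mul_mem hΓXY hn.2 hm.2 (by simp [curveY])
    exact mul_left_cancel₀ hy (by simpa [curveY] using this)

theorem not_blockable_of_inv_mul_eq_mk_zero_snd {s : ℝ} (hs : 0 < s)
    (hΓs : ∀ r : ℤ, mk 0 0 (s * r) ∈ Γ) (hΓZ : ∀ γ ∈ Γ, ∃ k : ℤ, Z γ = s * k)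
    (hΓYX : ∀ γ ∈ Γ, ∀ γ' ∈ Γ, Y γ = Y γ' → X γ = X γ')
    {g₁ g₂ : Sol} {x z : ℝ} (hx : x ≠ 0) (h : g₁⁻¹ * g₂ = mk x 0 z) :
    ¬ Blockable Γ (QuotientGroup.mk g₁) (QuotientGroup.mk g₂) := by
  intro hB
  obtain ⟨ξ, hξinj, hξ⟩ := exists_injective_pos_seq_add_mul_intCast hs (-z)
  obtain ⟨v, t, hS⟩ := hB.exists_infinite_hits (fun n => isOneParam_curveX x (ξ n)) fun n => by
    obtain ⟨r, hr⟩ := (hξ n).2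
    rw [curveX_one _ (hξ n).1.ne', ← QuotientGroup.mk_mul_of_mem g₂ (hΓs (-r)),
      ← mul_inv_cancel_left g₁ g₂, h, mul_assoc]
    congr 2
    exact ext (by simp) (by simp) (by simp [hr]; ring)
  refine hS (finite_of_ratio_one_sub_exp_neg_eq hs hξinj (u := fun n => ξ n * t n) (θ := -Z v)
    (fun n hn => ⟨mul_pos (hξ n).1 hn.1.1, mul_lt_of_lt_one_right (hξ n).1 hn.1.2⟩)
    (fun n hn => ?_) (fun n hn m hm => ?_))
  · obtain ⟨k, hk⟩ := hΓZ _ hn.2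
    exact ⟨-k, by simp [curveX] at hk; push_cast; linarith⟩
  · have := X_eq_of_Y_eq_of_inv_mul_mem hΓYX hn.2 hm.2 (by simp [curveX])
    exact mul_left_cancel₀ hx (by simpa [curveX] using this)

end Sol

theorem Irrational.eq_of_intCast_sub_mul_eq {μ : ℝ} (hμ : Irrational μ) {p q p' q' : ℤ}
    (h : (p : ℝ) - μ * q = p' - μ * q') : p = p' ∧ q = q' := by
  obtain rfl : q = q' := by
    by_contra hq
    have : (q : ℝ) - q' ≠ 0 := sub_ne_zero.mpr (mod_cast hq)
    refine hμ.ne_rational (p - p') (q - q') ?_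
    push_cast
    field_simp
    linarith
  exact ⟨mod_cast (by linarith : (p : ℝ) = p'), rfl⟩

theorem irrational_of_add_inv_eq_intCast {x : ℝ} {T : ℤ} (hT : 2 < |T|) (h : x + x⁻¹ = T) :
    Irrational x := by
  rintro ⟨q, rfl⟩
  have hq : q + q⁻¹ = T := by exact_mod_cast h
  have hq0 : q ≠ 0 := by
    rintro rfl
    obtain rfl : T = 0 := by exact_mod_cast (by simpa using hq.symm : (T : ℚ) = 0)
    norm_num at hT
  have hnum : q.num.natAbs = q.den := by
    rw [← Rat.den_inv_of_ne_zero hq0, show q⁻¹ = T - q by linarith, Rat.intCast_sub_den]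
  have hden : q.den = 1 := (Nat.coprime_self _).mp (hnum ▸ q.reduced)
  rw [← Rat.coe_int_num_of_den_eq_one hden] at hq
  have : T = 2 ∨ T = -2 := by
    rcases Int.natAbs_eq_iff.mp (hnum.trans hden) with h1 | h1 <;> rw [h1] at hq <;> norm_num at hq
    · exact .inl (by exact_mod_cast hq.symm)
    · exact .inr (by exact_mod_cast hq.symm)
  rcases this with rfl | rfl <;> norm_num at hT

theorem Matrix.offDiag_ne_zero_of_det_eq_one_of_two_lt_abs_trace {M : Matrix (Fin 2) (Fin 2) ℤ}
    (hdet : M.det = 1) (htr : 2 < |M.trace|) : M 0 1 ≠ 0 ∧ M 1 0 ≠ 0 := by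
  rw [Matrix.det_fin_two] at hdet
  rw [Matrix.trace_fin_two] at htr
  refine mul_ne_zero_iff.mp fun h0 => ?_
  rcases Int.eq_one_or_neg_one_of_mul_eq_one' (by linarith : M 0 0 * M 1 1 = 1)
    with ⟨h1, h2⟩ | ⟨h1, h2⟩ <;> simp [h1, h2] at htr

section latticeSet

variable {a b c d s : ℝ} {γ γ' : Sol}

theorem mk_zero_zero_mem_latticeSet (r : ℤ) : Sol.mk 0 0 (s * r) ∈ latticeSet a b c d s :=
  ⟨0, 0, r, by simp⟩

theorem exists_Z_eq_of_mem_latticeSet (hγ : γ ∈ latticeSet a b c d s) :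
    ∃ k : ℤ, Sol.Z γ = s * k := by
  obtain ⟨p, q, r, rfl⟩ := hγ
  exact ⟨r, rfl⟩

theorem Y_eq_of_X_eq_of_mem_latticeSet (hirr : Irrational ((exp s - a) / b))
    (hγ : γ ∈ latticeSet a b c d s) (hγ' : γ' ∈ latticeSet a b c d s)
    (hX : Sol.X γ = Sol.X γ') : Sol.Y γ = Sol.Y γ' := by
  obtain ⟨p, q, r, rfl⟩ := hγ
  obtain ⟨p', q', r', rfl⟩ := hγ'
  obtain ⟨rfl, rfl⟩ := hirr.eq_of_intCast_sub_mul_eq (by simpa using hX)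
  rfl

theorem X_eq_of_Y_eq_of_mem_latticeSet (hirr : Irrational ((exp (-s) - d) / c))
    (hγ : γ ∈ latticeSet a b c d s) (hγ' : γ' ∈ latticeSet a b c d s)
    (hY : Sol.Y γ = Sol.Y γ') : Sol.X γ = Sol.X γ' := by
  obtain ⟨p, q, r, rfl⟩ := hγ
  obtain ⟨p', q', r', rfl⟩ := hγ'
  obtain ⟨rfl, rfl⟩ := hirr.eq_of_intCast_sub_mul_eq (by simpa using hY)
  rfl

end latticeSet

/-- Theorem 2 of the paper: for the lattice `Γ(A)` in `Sol`, a pair of points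
`m₁ = g₁Γ(A)`, `m₂ = g₂Γ(A)` with `g₁⁻¹g₂` on the plane `x = 0, y ≠ 0` or `y = 0, x ≠ 0`
is not blockable. -/
theorem stmt13 (A : Matrix.SpecialLinearGroup (Fin 2) ℤ)
    (htr : 2 < Matrix.trace (A : Matrix (Fin 2) (Fin 2) ℤ)) (s : ℝ) (hs : 0 < s)
    (hsum : Real.exp s + Real.exp (-s) =
      ((Matrix.trace (A : Matrix (Fin 2) (Fin 2) ℤ) : ℤ) : ℝ))
    (Γ : Subgroup Sol)
    (hΓ : (Γ : Set Sol) = latticeSet (((A : Matrix (Fin 2) (Fin 2) ℤ) 0 0 : ℤ) : ℝ)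
      (((A : Matrix (Fin 2) (Fin 2) ℤ) 0 1 : ℤ) : ℝ)
      (((A : Matrix (Fin 2) (Fin 2) ℤ) 1 0 : ℤ) : ℝ)
      (((A : Matrix (Fin 2) (Fin 2) ℤ) 1 1 : ℤ) : ℝ) s)
    (g₁ g₂ : Sol)
    (h : (∃ y z : ℝ, y ≠ 0 ∧ g₁⁻¹ * g₂ = Sol.mk 0 y z) ∨
         (∃ x z : ℝ, x ≠ 0 ∧ g₁⁻¹ * g₂ = Sol.mk x 0 z)) :
    ¬ Sol.Blockable Γ (QuotientGroup.mk g₁) (QuotientGroup.mk g₂) := by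
  have htr' := htr.trans_le (le_abs_self _)
  obtain ⟨hb, hc⟩ := Matrix.offDiag_ne_zero_of_det_eq_one_of_two_lt_abs_trace A.det_coe htr'
  have hexp : Irrational (exp s) :=
    irrational_of_add_inv_eq_intCast htr' (by rwa [← exp_neg])
  have hmem := Set.ext_iff.mp hΓ
  have hΓs : ∀ r : ℤ, Sol.mk 0 0 (s * r) ∈ Γ := fun r =>
    (hmem _).2 (mk_zero_zero_mem_latticeSet r)
  have hΓZ : ∀ γ ∈ Γ, ∃ k : ℤ, Sol.Z γ = s * k := fun γ hγ =>
    exists_Z_eq_of_mem_latticeSet ((hmem γ).1 hγ)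
  rcases h with ⟨y, z, hy, h⟩ | ⟨x, z, hx, h⟩
  · refine Sol.not_blockable_of_inv_mul_eq_mk_zero_fst hs hΓs hΓZ (fun γ hγ γ' hγ' => ?_) hy h
    exact Y_eq_of_X_eq_of_mem_latticeSet ((hexp.sub_intCast _).div_intCast hb)
      ((hmem γ).1 hγ) ((hmem γ').1 hγ')
  · refine Sol.not_blockable_of_inv_mul_eq_mk_zero_snd hs hΓs hΓZ (fun γ hγ γ' hγ' => ?_) hx h
    exact X_eq_of_Y_eq_of_mem_latticeSet (((exp_neg s ▸ hexp.inv).sub_intCast _).div_intCast hc)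
      ((hmem γ).1 hγ) ((hmem γ').1 hγ')
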